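/- Suppose θ*_i = 0 for every i = 1,…,k_θ (i.e. every parsimonious-model key coefficient is zero). Then θ₀ = 0, and moreover all the parsimonious nuisance coefficients δ*_{(i)} coincide and equal δ₀. -/

import Mathlib

/-!
Write `x = (x_δ, x_θ)`, `G = E[xx']` and `m = E[xy]`. The normal equations of the full model say
`β₀ ᵥ* G = m`; those of the `i`-th parsimonious model, when `θ*_i = 0`, say that `β_i := (δ*_{(i)}, 0)`
satisfies `(β_i ᵥ* G)_s = m_s` for `s` in the δ-block and for `s = θ_i`. For a positive definite `G`,
two vectors `u, w` such that each coordinate `s` has `u_s = w_s` or `(u ᵥ* G)_s = (w ᵥ* G)_s` are equal,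
since then `(u - w) ⬝ᵥ ((u - w) ᵥ* G) = 0`. Applied to `β_i, β_{i'}` this makes all `δ*_{(i)}` equal;
then every `β_i` satisfies all normal equations, and applied to `β₀, β_i` it gives `β₀ = β_i`.
-/

open MeasureTheory Matrix

namespace Matrix.PosDef

variable {ι : Type*} [Fintype ι] {G : Matrix ι ι ℝ}

theorem eq_zero_of_forall_eq_zero_or_vecMul_eq_zero (hG : G.PosDef) {v : ι → ℝ}
    (h : ∀ s, v s = 0 ∨ (v ᵥ* G) s = 0) : v = 0 := by
  by_contra hv
  have hquad : v ⬝ᵥ (v ᵥ* G) = 0 :=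
    Finset.sum_eq_zero fun s _ => (h s).elim (fun hs => by simp [hs]) fun hs => by simp [hs]
  have hpos := hG.dotProduct_mulVec_pos hv
  rw [star_trivial, dotProduct_mulVec, dotProduct_comm, hquad] at hpos
  exact hpos.false

theorem eq_of_forall_eq_or_vecMul_eq (hG : G.PosDef) {u w : ι → ℝ}
    (h : ∀ s, u s = w s ∨ (u ᵥ* G) s = (w ᵥ* G) s) : u = w :=
  sub_eq_zero.mp <| hG.eq_zero_of_forall_eq_zero_or_vecMul_eq_zero fun s => by
    simpa [sub_vecMul, sub_eq_zero] using h s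

end Matrix.PosDef

theorem integral_sub_sum_mul_mul {Ω ι : Type*} [MeasurableSpace Ω] [Fintype ι] {P : Measure Ω}
    {y f : Ω → ℝ} {x : Ω → ι → ℝ} (hy : MemLp y 2 P) (hf : MemLp f 2 P)
    (hx : ∀ a, MemLp (fun ω => x ω a) 2 P) (c : ι → ℝ) :
    ∫ ω, (y ω - ∑ a, c a * x ω a) * f ω ∂P
      = ∫ ω, y ω * f ω ∂P - ∑ a, c a * ∫ ω, x ω a * f ω ∂P := by
  have hxf : ∀ a, Integrable (fun ω => c a * (x ω a * f ω)) P :=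
    fun a => ((hx a).integrable_mul hf).const_mul (c a)
  have hyf : Integrable (fun ω => y ω * f ω) P := hy.integrable_mul hf
  simp_rw [sub_mul, Finset.sum_mul, mul_assoc]
  rw [integral_sub hyf (integrable_finsetSum _ fun a _ => hxf a),
    integral_finsetSum _ fun a _ => hxf a]
  simp_rw [integral_const_mul]

theorem vecMul_gram_sumElim_eq_iff_integral_residual_mul_eq_zero {Ω ι κ : Type*}
    [MeasurableSpace Ω] [Fintype ι] [Fintype κ] {P : Measure Ω} {y : Ω → ℝ} {u : Ω → ι → ℝ}
    {w : Ω → κ → ℝ} (hy : MemLp y 2 P) (hu : ∀ a, MemLp (fun ω => u ω a) 2 P)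
    (hw : ∀ b, MemLp (fun ω => w ω b) 2 P) (c : ι → ℝ) (d : κ → ℝ) (s : ι ⊕ κ) :
    (Sum.elim c d ᵥ* Matrix.of fun s t => ∫ ω, Sum.elim (u ω) (w ω) s * Sum.elim (u ω) (w ω) t ∂P) s
        = ∫ ω, y ω * Sum.elim (u ω) (w ω) s ∂P ↔
      ∫ ω, (y ω - ∑ a, c a * u ω a - ∑ b, d b * w ω b) * Sum.elim (u ω) (w ω) s ∂P = 0 := by
  have hx : ∀ t, MemLp (fun ω => Sum.elim (u ω) (w ω) t) 2 P := Sum.rec hu hw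
  have h := integral_sub_sum_mul_mul hy (hx s) hx (Sum.elim c d)
  simp only [Fintype.sum_sum_type, Sum.elim_inl, Sum.elim_inr, ← sub_sub] at h
  rw [h, sub_sub, sub_eq_zero, eq_comm, vecMul, dotProduct, Fintype.sum_sum_type]
  rfl

theorem theta0_zero_of_parsimonious_zero_general
    {Ω : Type*} [MeasurableSpace Ω] (P : Measure Ω)
    (kδ kθ : ℕ)
    (y : Ω → ℝ) (xδ : Ω → Fin kδ → ℝ) (xθ : Ω → Fin kθ → ℝ)
    -- finite second moments
    (hy2 : MemLp y 2 P)
    (hxδ2 : ∀ j, MemLp (fun ω => xδ ω j) 2 P)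
    (hxθ2 : ∀ i, MemLp (fun ω => xθ ω i) 2 P)
    -- E[xx'] is positive definite
    (hGram : Matrix.PosDef (Matrix.of fun j j' : Fin kδ ⊕ Fin kθ =>
      ∫ ω, Sum.elim (xδ ω) (xθ ω) j * Sum.elim (xδ ω) (xθ ω) j' ∂P))
    -- full projection coefficients β₀ = (δ₀', θ₀')' : E[(y − β₀'x)x] = 0
    (δ0 : Fin kδ → ℝ) (θ0 : Fin kθ → ℝ)
    (hβ0δ : ∀ j : Fin kδ,
      ∫ ω, (y ω - ∑ a, δ0 a * xδ ω a - ∑ b, θ0 b * xθ ω b) * xδ ω j ∂P = 0)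
    (hβ0θ : ∀ i : Fin kθ,
      ∫ ω, (y ω - ∑ a, δ0 a * xδ ω a - ∑ b, θ0 b * xθ ω b) * xθ ω i ∂P = 0)
    -- parsimonious coefficients β*_{(i)} = (δ*_{(i)}', θ*_i)' :
    -- E[(y − β*_{(i)}'x_{(i)})x_{(i)}] = 0
    (δs : Fin kθ → Fin kδ → ℝ) (θs : Fin kθ → ℝ)
    (hβsδ : ∀ i, ∀ j : Fin kδ,
      ∫ ω, (y ω - ∑ a, δs i a * xδ ω a - θs i * xθ ω i) * xδ ω j ∂P = 0)
    (hβsθ : ∀ i,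
      ∫ ω, (y ω - ∑ a, δs i a * xδ ω a - θs i * xθ ω i) * xθ ω i ∂P = 0)
    -- hypothesis: θ*_i = 0 for every i
    (h0 : ∀ i, θs i = 0) :
    θ0 = 0 ∧ ∀ i, δs i = δ0 := by
  have hnormal := vecMul_gram_sumElim_eq_iff_integral_residual_mul_eq_zero hy2 hxδ2 hxθ2
  set G := Matrix.of fun s t => ∫ ω, Sum.elim (xδ ω) (xθ ω) s * Sum.elim (xδ ω) (xθ ω) t ∂P
  set m := fun s => ∫ ω, y ω * Sum.elim (xδ ω) (xθ ω) s ∂P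
  have hfull : ∀ s, (Sum.elim δ0 θ0 ᵥ* G) s = m s :=
    fun s => (hnormal _ _ s).mpr (s.rec hβ0δ hβ0θ)
  have hparsδ : ∀ i j, (Sum.elim (δs i) 0 ᵥ* G) (.inl j) = m (.inl j) :=
    fun i j => (hnormal _ _ _).mpr (by simpa [h0 i] using hβsδ i j)
  have hparsθ : ∀ i, (Sum.elim (δs i) 0 ᵥ* G) (.inr i) = m (.inr i) :=
    fun i => (hnormal _ _ _).mpr (by simpa [h0 i] using hβsθ i)
  have hδs : ∀ i i', δs i = δs i' := fun i i' => by
    have := hGram.eq_of_forall_eq_or_vecMul_eq (u := Sum.elim (δs i) 0) (w := Sum.elim (δs i') 0)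
      fun s => s.rec (fun j => .inr <| (hparsδ i j).trans (hparsδ i' j).symm) fun _ => .inl rfl
    simpa using congrArg (· ∘ Sum.inl) this
  have hβ0 : ∀ i, Sum.elim δ0 θ0 = Sum.elim (δs i) 0 := fun i =>
    hGram.eq_of_forall_eq_or_vecMul_eq fun s => .inr <| (hfull s).trans <| by
      rcases s with j | b
      · exact (hparsδ i j).symm
      · rw [hδs i b, hparsθ b]
  refine ⟨funext fun b => by simpa using congrFun (hβ0 b) (.inr b), fun i => ?_⟩
  funext a
  simpa using (congrFun (hβ0 i) (.inl a)).symm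

/-- In the linear projection setting (full model with regressors
`x = (x_δ', x_θ')'`, positive definite Gram matrix `E[xx']`, full-projection
coefficients `(δ₀, θ₀)` solving `E[(y − δ₀'x_δ − θ₀'x_θ)x] = 0`, and for each
`i` parsimonious coefficients `(δ* i, θ* i)` solving
`E[(y − (δ* i)'x_δ − (θ* i)·x_{θ,i})x_{(i)}] = 0`): if `θ* i = 0` for every `i`,
then `θ₀ = 0` and all parsimonious nuisance coefficients coincide: `δ* i = δ₀`. -/
theorem theta0_zero_of_parsimonious_zero
    {Ω : Type*} [MeasurableSpace Ω] (P : Measure Ω) [IsProbabilityMeasure P]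
    (kδ kθ : ℕ)
    (y : Ω → ℝ) (xδ : Ω → Fin kδ → ℝ) (xθ : Ω → Fin kθ → ℝ)
    (hymeas : Measurable y)
    (hxδmeas : ∀ j, Measurable fun ω => xδ ω j)
    (hxθmeas : ∀ i, Measurable fun ω => xθ ω i)
    -- finite second moments
    (hy2 : MemLp y 2 P)
    (hxδ2 : ∀ j, MemLp (fun ω => xδ ω j) 2 P)
    (hxθ2 : ∀ i, MemLp (fun ω => xθ ω i) 2 P)
    -- E[xx'] is positive definite
    (hGram : Matrix.PosDef (Matrix.of fun j j' : Fin kδ ⊕ Fin kθ =>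
      ∫ ω, Sum.elim (xδ ω) (xθ ω) j * Sum.elim (xδ ω) (xθ ω) j' ∂P))
    -- full projection coefficients β₀ = (δ₀', θ₀')' : E[(y − β₀'x)x] = 0
    (δ0 : Fin kδ → ℝ) (θ0 : Fin kθ → ℝ)
    (hβ0δ : ∀ j : Fin kδ,
      ∫ ω, (y ω - ∑ a, δ0 a * xδ ω a - ∑ b, θ0 b * xθ ω b) * xδ ω j ∂P = 0)
    (hβ0θ : ∀ i : Fin kθ,
      ∫ ω, (y ω - ∑ a, δ0 a * xδ ω a - ∑ b, θ0 b * xθ ω b) * xθ ω i ∂P = 0)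
    -- parsimonious coefficients β*_{(i)} = (δ*_{(i)}', θ*_i)' :
    -- E[(y − β*_{(i)}'x_{(i)})x_{(i)}] = 0
    (δs : Fin kθ → Fin kδ → ℝ) (θs : Fin kθ → ℝ)
    (hβsδ : ∀ i, ∀ j : Fin kδ,
      ∫ ω, (y ω - ∑ a, δs i a * xδ ω a - θs i * xθ ω i) * xδ ω j ∂P = 0)
    (hβsθ : ∀ i,
      ∫ ω, (y ω - ∑ a, δs i a * xδ ω a - θs i * xθ ω i) * xθ ω i ∂P = 0)
    -- hypothesis: θ*_i = 0 for every i
    (h0 : ∀ i, θs i = 0) :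
    θ0 = 0 ∧ ∀ i, δs i = δ0 :=
  theta0_zero_of_parsimonious_zero_general P kδ kθ y xδ xθ hy2 hxδ2 hxθ2 hGram δ0 θ0 hβ0δ hβ0θ δs θs
    hβsδ hβsθ h0
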